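/- arXiv:2006.11607 — 4 statements merged into one kernel-verified Lean document; each statement's English description precedes it below -/
import Mathlib

section
/- Let $S$ be a finite set of size $n$, let $X_1, \ldots, X_m$ be uniformly sampled from $S$ without replacement (i.e., $(X_1,\ldots,X_m)$ is uniform over ordered tuples of distinct elements), and let $X'_1, \ldots, X'_m$ be i.i.d. uniform on $S$. Then for any non-negative function $f : S^m \to \mathbb{R}_{\ge 0}$, we have $\mathbb{E}[f(X_1,\ldots,X_m)] \le \left(1 + \frac{m}{n-m}\right)^m \, \mathbb{E}[f(X'_1,\ldots,X'_m)]$. -/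
/-!
Summing over injective tuples only drops non-negative terms of the sum over all tuples, so the
numerators compare; for the denominators, `n (n - 1) ⋯ (n - m + 1) ≥ (n - m) ^ m`, and
`n ^ m / (n - m) ^ m` is exactly `(1 + m / (n - m)) ^ m`.
-/

open Finset

theorem sum_embedding_le_sum_fun {α β M : Type*} [Fintype (α ↪ β)] [Fintype (α → β)]
    [AddCommMonoid M] [PartialOrder M] [IsOrderedAddMonoid M]
    {f : (α → β) → M} (hf : ∀ g, 0 ≤ f g) :
    ∑ σ : α ↪ β, f σ ≤ ∑ g, f g :=
  (sum_map univ ⟨_, DFunLike.coe_injective⟩ f).symm.trans_le (sum_le_univ_sum_of_nonneg hf)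

theorem Nat.cast_sub_pow_le_descFactorial {n m : ℕ} (hmn : m ≤ n) :
    ((n : ℝ) - m) ^ m ≤ n.descFactorial m := by
  rw [← Nat.cast_sub hmn]
  exact_mod_cast (Nat.pow_le_pow_left (by omega) m).trans (Nat.pow_sub_le_descFactorial n m)

theorem sampling_without_replacement_comparison_general
    (S : Type*) [Fintype S] (m : ℕ)
    (hmn : m < Fintype.card S)
    (f : (Fin m → S) → ℝ) (hf : ∀ g, 0 ≤ f g) :
    (∑ σ : Fin m ↪ S, f (fun i => σ i)) / (Fintype.card (Fin m ↪ S) : ℝ)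
      ≤ (1 + (m : ℝ) / ((Fintype.card S : ℝ) - m)) ^ m *
        ((∑ g : Fin m → S, f g) / (Fintype.card S : ℝ) ^ m) := by
  set n := Fintype.card S
  have hgap : (0 : ℝ) < n - m := sub_pos.2 (by exact_mod_cast hmn)
  have hn : (n : ℝ) ≠ 0 := by exact_mod_cast (Nat.zero_lt_of_lt hmn).ne'
  rw [Fintype.card_embedding_eq, Fintype.card_fin]
  calc (∑ σ : Fin m ↪ S, f σ) / (n.descFactorial m : ℝ)
      ≤ (∑ g, f g) / (n.descFactorial m : ℝ) := by gcongr; exact sum_embedding_le_sum_fun hf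
    _ ≤ (∑ g, f g) / ((n : ℝ) - m) ^ m :=
        div_le_div_of_nonneg_left (sum_nonneg fun g _ => hf g) (by positivity)
          (Nat.cast_sub_pow_le_descFactorial hmn.le)
    _ = (1 + (m : ℝ) / (n - m)) ^ m * ((∑ g, f g) / (n : ℝ) ^ m) := by
        rw [one_add_div hgap.ne', sub_add_cancel, div_pow]
        field_simp

/-- Expectation of a non-negative function under uniform sampling without replacement
is at most `(1 + m/(n-m))^m` times its expectation under i.i.d. uniform sampling. -/
theorem sampling_without_replacement_comparison
    (S : Type*) [Fintype S] [DecidableEq S] (m : ℕ)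
    (hmn : m < Fintype.card S)
    (f : (Fin m → S) → ℝ) (hf : ∀ g, 0 ≤ f g) :
    (∑ σ : Fin m ↪ S, f (fun i => σ i)) / (Fintype.card (Fin m ↪ S) : ℝ)
      ≤ (1 + (m : ℝ) / ((Fintype.card S : ℝ) - m)) ^ m *
        ((∑ g : Fin m → S, f g) / (Fintype.card S : ℝ) ^ m) :=
  sampling_without_replacement_comparison_general S m hmn f hf
end

section
/- Let $X_1, \ldots, X_n$ be arbitrary (possibly dependent) random variables taking values in $[0,1]$ and let $m \ge 2$ be an integer. Suppose $p \in [0,1]$ satisfies: for every subset $A \subseteq [n]$ with $|A| \le m$, $\mathbb{E}\left[\prod_{i \in A} X_i\right] \le p^{|A|}$. If $m \le np$, then $\mathbb{E}\left[\left(\sum_{i=1}^n X_i\right)^m\right] \le (2e^2 np)^m$. -/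
/-!
Expanding the power, `E[(∑ Xᵢ)^m] = ∑_{f : [m] → [n]} E[∏ⱼ X_{f j}]`. As the `Xᵢ` lie in `[0,1]`,
each product is at most the product over the distinct indices `image f`, whose expectation is at
most `p^|image f|`. Building `f` one coordinate at a time, a new coordinate either repeats one of
at most `m` earlier values or contributes a factor `p` for each of the `n` fresh ones, so
`∑_f p^|image f| ≤ (np + m)^m ≤ (2np)^m` when `m ≤ np`.
-/

open MeasureTheory Finset

theorem Fin.image_univ_cons {ι : Type*} [DecidableEq ι] {m : ℕ} (v : ι) (g : Fin m → ι) :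
    univ.image (Fin.cons v g : Fin (m + 1) → ι) = insert v (univ.image g) := by
  apply coe_injective
  simp only [coe_image, coe_univ, Set.image_univ, coe_insert, Fin.range_cons]

section CountingImages

variable {ι : Type*} [Fintype ι] [DecidableEq ι] {p : ℝ}

theorem Finset.sum_pow_card_insert_le (hp : 0 ≤ p) (S : Finset ι) :
    ∑ v, p ^ #(insert v S) ≤ (Fintype.card ι * p + #S) * p ^ #S := by
  have hterm : ∀ v, p ^ #(insert v S) ≤ (if v ∈ S then p ^ #S else 0) + p * p ^ #S := by
    intro v
    by_cases hv : v ∈ S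
    · simp only [hv, insert_eq_of_mem, ↓reduceIte, le_add_iff_nonneg_right]
      positivity
    · simp [hv, card_insert_of_notMem, pow_succ, mul_comm]
  calc ∑ v, p ^ #(insert v S)
      ≤ ∑ v, ((if v ∈ S then p ^ #S else 0) + p * p ^ #S) := sum_le_sum fun v _ => hterm v
    _ = (Fintype.card ι * p + #S) * p ^ #S := by
      rw [sum_add_distrib, sum_ite_mem, univ_inter, sum_const, sum_const, card_univ]
      simp only [nsmul_eq_mul]
      ring

theorem Finset.sum_pow_card_image_le (hp : 0 ≤ p) (m : ℕ) :
    ∑ f : Fin m → ι, p ^ #(univ.image f) ≤ (Fintype.card ι * p + m) ^ m := by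
  induction m with
  | zero => simp
  | succ m ih =>
    calc ∑ f : Fin (m + 1) → ι, p ^ #(univ.image f)
        = ∑ g : Fin m → ι, ∑ v, p ^ #(insert v (univ.image g)) := by
          rw [← (Fin.consEquiv fun _ => ι).sum_comp, Fintype.sum_prod_type_right]
          simp only [← Fin.image_univ_cons]
          rfl
      _ ≤ ∑ g : Fin m → ι, (Fintype.card ι * p + m) * p ^ #(univ.image g) := by
          refine sum_le_sum fun g _ => (sum_pow_card_insert_le hp _).trans ?_
          gcongr
          exact_mod_cast card_image_le.trans_eq (by simp)
      _ ≤ (Fintype.card ι * p + (m + 1 : ℕ)) ^ (m + 1) := by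
          rw [← mul_sum, pow_succ']
          gcongr
          · linarith
          · exact ih.trans (by gcongr; linarith)

end CountingImages

theorem Finset.prod_comp_le_prod_image {κ ι : Type*} [DecidableEq ι] (s : Finset κ) (f : κ → ι)
    {x : ι → ℝ} (hx : ∀ i ∈ s.image f, x i ∈ Set.Icc (0 : ℝ) 1) :
    ∏ a ∈ s, x (f a) ≤ ∏ i ∈ s.image f, x i := by
  rw [prod_comp]
  refine prod_le_prod (fun i hi => pow_nonneg (hx i hi).1 _) fun i hi => ?_
  obtain ⟨a, ha, rfl⟩ := mem_image.1 hi
  exact pow_le_of_le_one (hx _ hi).1 (hx _ hi).2 (card_ne_zero_of_mem (mem_filter.2 ⟨ha, rfl⟩))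

section UnitIntervalProducts

variable {Ω ι : Type*} [MeasurableSpace Ω] {μ : Measure Ω} [IsFiniteMeasure μ] {X : ι → Ω → ℝ}

theorem integrable_prod_of_mem_Icc (hmeas : ∀ i, Measurable (X i))
    (hX : ∀ i ω, X i ω ∈ Set.Icc (0 : ℝ) 1) (s : Finset ι) :
    Integrable (fun ω => ∏ i ∈ s, X i ω) μ :=
  .of_mem_Icc 0 1 (s.measurable_prod fun i _ => hmeas i).aemeasurable <| .of_forall fun ω =>
    ⟨prod_nonneg fun i _ => (hX i ω).1, prod_le_one (fun i _ => (hX i ω).1) fun i _ => (hX i ω).2⟩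

theorem integral_sum_pow_eq_sum_integral_prod [Fintype ι] (hmeas : ∀ i, Measurable (X i))
    (hX : ∀ i ω, X i ω ∈ Set.Icc (0 : ℝ) 1) (m : ℕ) :
    ∫ ω, (∑ i, X i ω) ^ m ∂μ = ∑ f : Fin m → ι, ∫ ω, ∏ j, X (f j) ω ∂μ := by
  simp_rw [Fintype.sum_pow]
  exact integral_finsetSum _ fun f _ =>
    integrable_prod_of_mem_Icc (fun j => hmeas (f j)) (fun j => hX (f j)) univ

theorem integral_prod_comp_le_integral_prod_image [DecidableEq ι] {κ : Type*} [Fintype κ]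
    (hmeas : ∀ i, Measurable (X i)) (hX : ∀ i ω, X i ω ∈ Set.Icc (0 : ℝ) 1) (f : κ → ι) :
    ∫ ω, ∏ j, X (f j) ω ∂μ ≤ ∫ ω, ∏ i ∈ univ.image f, X i ω ∂μ :=
  integral_mono (integrable_prod_of_mem_Icc (fun j => hmeas (f j)) (fun j => hX (f j)) univ)
    (integrable_prod_of_mem_Icc hmeas hX _)
    fun ω => prod_comp_le_prod_image univ f fun i _ => hX i ω

end UnitIntervalProducts

theorem moment_bound_general {Ω : Type*} [MeasurableSpace Ω] (μ : Measure Ω) [IsProbabilityMeasure μ]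
    (n m : ℕ) (X : Fin n → Ω → ℝ)
    (hmeas : ∀ i, Measurable (X i))
    (hX : ∀ i ω, X i ω ∈ Set.Icc (0 : ℝ) 1)
    (p : ℝ) (hp : p ∈ Set.Icc (0 : ℝ) 1)
    (hprod : ∀ A : Finset (Fin n), A.card ≤ m →
      (∫ ω, ∏ i ∈ A, X i ω ∂μ) ≤ p ^ A.card)
    (hmnp : (m : ℝ) ≤ n * p) :
    (∫ ω, (∑ i, X i ω) ^ m ∂μ) ≤ (2 * Real.exp 2 * n * p) ^ m := by
  have hnp : 0 ≤ (n : ℝ) * p := by have := hp.1; positivity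
  calc ∫ ω, (∑ i, X i ω) ^ m ∂μ
      = ∑ f : Fin m → Fin n, ∫ ω, ∏ j, X (f j) ω ∂μ :=
        integral_sum_pow_eq_sum_integral_prod hmeas hX m
    _ ≤ ∑ f : Fin m → Fin n, p ^ #(univ.image f) := sum_le_sum fun f _ =>
        (integral_prod_comp_le_integral_prod_image hmeas hX f).trans <|
          hprod (univ.image f) (card_image_le.trans_eq (by simp))
    _ ≤ (n * p + m) ^ m := by simpa using sum_pow_card_image_le (ι := Fin n) hp.1 m
    _ ≤ (2 * Real.exp 2 * n * p) ^ m := by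
        have he : (1 : ℝ) ≤ Real.exp 2 := Real.one_le_exp (by norm_num)
        gcongr
        nlinarith

/-- Moment bound for sums of dependent `[0,1]`-valued random variables whose product
moments of order at most `m` are dominated by `p^|A|`. -/
theorem moment_bound {Ω : Type*} [MeasurableSpace Ω] (μ : Measure Ω) [IsProbabilityMeasure μ]
    (n m : ℕ) (hm : 2 ≤ m) (X : Fin n → Ω → ℝ)
    (hmeas : ∀ i, Measurable (X i))
    (hX : ∀ i ω, X i ω ∈ Set.Icc (0 : ℝ) 1)
    (p : ℝ) (hp : p ∈ Set.Icc (0 : ℝ) 1)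
    (hprod : ∀ A : Finset (Fin n), A.card ≤ m →
      (∫ ω, ∏ i ∈ A, X i ω ∂μ) ≤ p ^ A.card)
    (hmnp : (m : ℝ) ≤ n * p) :
    (∫ ω, (∑ i, X i ω) ^ m ∂μ) ≤ (2 * Real.exp 2 * n * p) ^ m :=
  moment_bound_general μ n m X hmeas hX p hp hprod hmnp
end

section
/- Let $k \ge 80$, let $m \le (\ln k)/4$ be a positive integer, define $\psi(\gamma) = 1$ for $\gamma < 1$, $\psi(\gamma) = 2/k$ for $1 \le \gamma \le 50$, and $\psi(\gamma) = 4k e^{-(\gamma/20)\ln k}$ for $\gamma > 50$, and let $n \ge 1$. Then there is a universal constant $a_2 > 0$ (e.g. $a_2 = 500$ suffices) such that $\int_{[0,n]^m} \psi\left(\max_{i \in [m]} x_i - \tfrac{1}{k}\right)\, dx \le 1 + \frac{a_2^m}{k}$. -/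
open MeasureTheory

/-- The tentative-selection probability bound. -/
noncomputable def psi (k γ : ℝ) : ℝ :=
  if γ < 1 then 1
  else if γ ≤ 50 then 2 / k
  else 4 * k * Real.exp (-(γ / 20) * Real.log k)

/-!
As a function of `z`, `psi k (z - 1/k)` is dominated by
`𝟙[z ≤ 1 + 1/k] + (2/k) 𝟙[z ≤ 51] + (4/k) exp (-(log k / 100) z)`: beyond `z = 51` the
tail `4k · k^(-(z - 1/k)/20)` has enough decay to spare a factor `k²`. At `z = maxᵢ xᵢ` each
of the three terms is bounded by a product over the coordinates (for the exponential, because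
`∑ xᵢ ≤ m · maxᵢ xᵢ`), so by Fubini the integral over `[0,n]^m` is at most
`(1 + 1/k)^m + (2/k) 51^m + (4/k) (100m / log k)^m`, and `m ≤ (log k)/4` makes the last base
at most `25`.
-/

open Set Real Fintype

theorem mul_exp_neg_mul_log {k : ℝ} (hk : 0 < k) (s : ℝ) :
    k * exp (-s * log k) = k⁻¹ * exp ((2 - s) * log k) := by
  rw [show (2 - s) * log k = log k + log k + -s * log k by ring, exp_add, exp_add, exp_log hk]
  field_simp

section Psi

variable {k : ℝ}

theorem psi_nonneg (hk : 0 ≤ k) (γ : ℝ) : 0 ≤ psi k γ := by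
  unfold psi; split_ifs <;> positivity

theorem psi_le_two_div (hk : 4 ≤ k) {γ : ℝ} (hγ : 1 ≤ γ) : psi k γ ≤ 2 / k := by
  have hk0 : 0 < k := by linarith
  have hlog : 2 * log 2 ≤ log k := by
    rw [← log_rpow two_pos]; exact log_le_log (by norm_num) (by norm_num; linarith)
  unfold psi
  rw [if_neg (not_lt.2 hγ)]
  split_ifs with h50
  · rfl
  · calc 4 * k * exp (-(γ / 20) * log k) = 4 / k * exp ((2 - γ / 20) * log k) := by
          rw [mul_assoc, mul_exp_neg_mul_log hk0]; ring
      _ ≤ 4 / k * exp (-log 2) := by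
          gcongr
          have hL : 0 ≤ log k := log_nonneg (by linarith)
          nlinarith [mul_nonneg (by linarith : 0 ≤ γ / 20 - 5 / 2) hL]
      _ = 2 / k := by rw [exp_neg, exp_log two_pos]; ring

theorem psi_le_one (hk : 4 ≤ k) (γ : ℝ) : psi k γ ≤ 1 := by
  by_cases hγ : γ < 1
  · simp [psi, hγ]
  · exact (psi_le_two_div hk (not_lt.1 hγ)).trans (by rw [div_le_one (by linarith)]; linarith)

theorem psi_sub_inv_le_exp_of_lt (hk : 4 ≤ k) {z : ℝ} (hz : 51 < z) :
    psi k (z - 1 / k) ≤ 4 / k * exp (-(log k / 100) * z) := by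
  have hk0 : 0 < k := by linarith
  have hL : 0 ≤ log k := log_nonneg (by linarith)
  have hinv : 1 / k ≤ 1 / 4 := by gcongr
  unfold psi
  rw [if_neg (by linarith), if_neg (by linarith), mul_assoc, mul_exp_neg_mul_log hk0,
    ← mul_assoc, ← div_eq_mul_inv]
  gcongr 4 / k * exp ?_
  nlinarith

theorem psi_sub_inv_le (hk : 4 ≤ k) (z : ℝ) :
    psi k (z - 1 / k) ≤ (Iic (1 + 1 / k)).indicator 1 z + 2 / k * (Iic 51).indicator 1 z
      + 4 / k * exp (-(log k / 100) * z) := by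
  have h₁ : 0 ≤ (Iic (1 + 1 / k)).indicator (1 : ℝ → ℝ) z :=
    indicator_nonneg (fun _ _ => zero_le_one) z
  have h₂ : 0 ≤ 2 / k * (Iic 51).indicator (1 : ℝ → ℝ) z :=
    mul_nonneg (by positivity) (indicator_nonneg (fun _ _ => zero_le_one) z)
  have h₃ : 0 ≤ 4 / k * exp (-(log k / 100) * z) := by positivity
  rcases le_or_gt z (1 + 1 / k) with hz | hz
  · rw [indicator_of_mem (mem_Iic.2 hz), Pi.one_apply]
    linarith [psi_le_one hk (z - 1 / k)]
  rcases le_or_gt z 51 with hz' | hz'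
  · rw [indicator_of_mem (mem_Iic.2 hz'), Pi.one_apply, mul_one]
    linarith [psi_le_two_div hk (by linarith : 1 ≤ z - 1 / k)]
  · linarith [psi_sub_inv_le_exp_of_lt hk hz']

end Psi

section Coordinatewise

variable {ι : Type*} [Fintype ι] [Nonempty ι]

theorem indicator_Iic_ciSup (a : ℝ) (x : ι → ℝ) :
    (Iic a).indicator (1 : ℝ → ℝ) (⨆ i, x i) = ∏ i, (Iic a).indicator 1 (x i) := by
  by_cases h : ∀ i, x i ≤ a
  · rw [indicator_of_mem (mem_Iic.2 (ciSup_le h)),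
      Finset.prod_eq_one fun i _ => indicator_of_mem (mem_Iic.2 (h i)) _, Pi.one_apply]
  · obtain ⟨i, hi⟩ := not_forall.1 h
    have hsup : a < ⨆ i, x i := (not_le.1 hi).trans_le (le_ciSup (Finite.bddAbove_range x) i)
    rw [indicator_of_notMem (notMem_Iic.2 hsup),
      Finset.prod_eq_zero (Finset.mem_univ i)
        (indicator_of_notMem (notMem_Iic.2 (not_le.1 hi)) _)]

theorem exp_neg_mul_ciSup_le_prod {c : ℝ} (hc : 0 ≤ c) (x : ι → ℝ) :
    exp (-c * ⨆ i, x i) ≤ ∏ i, exp (-(c / card ι) * x i) := by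
  rw [← exp_sum, ← Finset.mul_sum, exp_le_exp]
  have hsum : ∑ i, x i ≤ card ι * ⨆ i, x i := by
    simpa using Finset.sum_le_card_nsmul Finset.univ x _
      fun i _ => le_ciSup (Finite.bddAbove_range x) i
  have hcard : (0 : ℝ) < card ι := by exact_mod_cast card_pos
  calc -c * ⨆ i, x i = -(c / card ι) * (card ι * ⨆ i, x i) := by field_simp
    _ ≤ -(c / card ι) * ∑ i, x i :=
      mul_le_mul_of_nonpos_left hsum (neg_nonpos.2 (div_nonneg hc hcard.le))

theorem psi_ciSup_sub_inv_le {k : ℝ} (hk : 4 ≤ k) (x : ι → ℝ) :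
    psi k ((⨆ i, x i) - 1 / k) ≤ ∏ i, (Iic (1 + 1 / k)).indicator 1 (x i)
      + 2 / k * ∏ i, (Iic 51).indicator 1 (x i)
      + 4 / k * ∏ i, exp (-(log k / 100 / card ι) * x i) := by
  rw [← indicator_Iic_ciSup, ← indicator_Iic_ciSup]
  refine (psi_sub_inv_le hk _).trans ?_
  gcongr
  exact exp_neg_mul_ciSup_le_prod (div_nonneg (log_nonneg (by linarith)) (by norm_num)) x

end Coordinatewise

section Cube

variable {ι E : Type*} [Fintype ι] [MeasureSpace E] [SigmaFinite (volume : Measure E)]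

theorem setIntegral_univ_pi_prod (S : Set E) (f : E → ℝ) :
    ∫ x in univ.pi fun _ : ι => S, ∏ i, f (x i) = (∫ t in S, f t) ^ card ι := by
  rw [volume_pi, Measure.restrict_pi_pi, integral_fintype_prod_eq_pow]

theorem MeasureTheory.IntegrableOn.univ_pi_prod {S : Set E} {f : E → ℝ}
    (hf : IntegrableOn f S) :
    IntegrableOn (fun x : ι → E => ∏ i, f (x i)) (univ.pi fun _ => S) := by
  rw [IntegrableOn, volume_pi, Measure.restrict_pi_pi]
  exact Integrable.fintype_prod fun _ => hf

end Cube

theorem integrableOn_indicator_Iic_Icc (a b c : ℝ) :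
    IntegrableOn ((Iic a).indicator (1 : ℝ → ℝ)) (Icc b c) :=
  (integrableOn_const measure_Icc_lt_top.ne).indicator measurableSet_Iic

theorem setIntegral_Icc_indicator_Iic_le {a : ℝ} (ha : 0 ≤ a) (n : ℝ) :
    ∫ t in Icc 0 n, (Iic a).indicator (1 : ℝ → ℝ) t ≤ a := by
  rw [integral_indicator_one measurableSet_Iic, Measure.real_def,
    Measure.restrict_apply measurableSet_Iic]
  calc (volume (Iic a ∩ Icc 0 n)).toReal ≤ (volume (Icc 0 a)).toReal :=
        ENNReal.toReal_mono measure_Icc_lt_top.ne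
          (measure_mono fun t ht => ⟨ht.2.1, ht.1⟩)
    _ = a := by simp [ha]

theorem setIntegral_Icc_exp_neg_mul_le {c : ℝ} (hc : 0 < c) (n : ℝ) :
    ∫ t in Icc 0 n, exp (-c * t) ≤ c⁻¹ := by
  have hint : IntegrableOn (fun t => exp (-c * t)) (Ioi 0) := by
    simpa using exp_neg_integrableOn_Ioi 0 hc
  calc ∫ t in Icc 0 n, exp (-c * t) = ∫ t in Ioc 0 n, exp (-c * t) :=
        integral_Icc_eq_integral_Ioc
    _ ≤ ∫ t in Ioi 0, exp (-c * t) :=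
      setIntegral_mono_set hint (ae_of_all _ fun t => (exp_pos _).le)
        Ioc_subset_Ioi_self.eventuallyLE
    _ = c⁻¹ := by rw [integral_exp_mul_Ioi (by linarith)]; simp

theorem setIntegral_psi_ciSup_sub_inv_le {ι : Type*} [Fintype ι] [Nonempty ι] {k : ℝ}
    (hk : 4 ≤ k) (n : ℝ) :
    ∫ x in univ.pi fun _ : ι => Icc 0 n, psi k ((⨆ i, x i) - 1 / k)
      ≤ (1 + 1 / k) ^ card ι + 2 / k * 51 ^ card ι
        + 4 / k * (100 * card ι / log k) ^ card ι := by
  have hk0 : 0 < k := by linarith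
  have hc : 0 < log k / 100 / card ι := by
    have : 0 < log k := log_pos (by linarith)
    positivity
  have hexp : IntegrableOn (fun t => exp (-(log k / 100 / card ι) * t)) (Icc 0 n) :=
    (by fun_prop : Continuous fun t => exp (-(log k / 100 / card ι) * t)).integrableOn_Icc
  have hint₁ := (integrableOn_indicator_Iic_Icc (1 + 1 / k) 0 n).univ_pi_prod (ι := ι)
  have hint₂ :=
    ((integrableOn_indicator_Iic_Icc 51 0 n).univ_pi_prod (ι := ι)).const_mul (2 / k)
  have hint₃ := (hexp.univ_pi_prod (ι := ι)).const_mul (4 / k)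
  calc _ ≤ ∫ x in univ.pi fun _ : ι => Icc 0 n, ∏ i, (Iic (1 + 1 / k)).indicator 1 (x i)
          + 2 / k * ∏ i, (Iic 51).indicator 1 (x i)
          + 4 / k * ∏ i, exp (-(log k / 100 / card ι) * x i) :=
        integral_mono_of_nonneg (ae_of_all _ fun x => psi_nonneg hk0.le _)
          ((hint₁.add hint₂).add hint₃) (ae_of_all _ fun x => psi_ciSup_sub_inv_le hk x)
    _ = (∫ t in Icc 0 n, (Iic (1 + 1 / k)).indicator 1 t) ^ card ι
          + 2 / k * (∫ t in Icc 0 n, (Iic (51 : ℝ)).indicator 1 t) ^ card ι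
          + 4 / k * (∫ t in Icc 0 n, exp (-(log k / 100 / card ι) * t)) ^ card ι := by
        rw [integral_add _ hint₃, integral_add hint₁ hint₂, integral_const_mul,
          integral_const_mul, setIntegral_univ_pi_prod, setIntegral_univ_pi_prod,
          setIntegral_univ_pi_prod _ fun t => exp (-(log k / 100 / card ι) * t)]
        exact hint₁.add hint₂
    _ ≤ _ := by
        have h₀ (a : ℝ) : 0 ≤ ∫ t in Icc 0 n, (Iic a).indicator (1 : ℝ → ℝ) t :=
          integral_nonneg (indicator_nonneg fun _ _ => zero_le_one)
        gcongr
        · exact h₀ _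
        · exact setIntegral_Icc_indicator_Iic_le (by positivity) n
        · exact h₀ _
        · exact setIntegral_Icc_indicator_Iic_le (by norm_num) n
        · refine (setIntegral_Icc_exp_neg_mul_le hc n).trans_eq ?_
          field_simp

theorem one_add_pow_le_one_add_mul {x : ℝ} (hx₀ : 0 ≤ x) (hx₁ : x ≤ 1) (m : ℕ) :
    (1 + x) ^ m ≤ 1 + (2 ^ m - 1) * x := by
  induction m with
  | zero => simp
  | succ m ih =>
    have h2 : (1 : ℝ) ≤ 2 ^ m := one_le_pow₀ (by norm_num)
    calc (1 + x) ^ (m + 1) = (1 + x) ^ m * (1 + x) := pow_succ _ _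
      _ ≤ (1 + (2 ^ m - 1) * x) * (1 + x) := by gcongr
      _ ≤ 1 + (2 ^ (m + 1) - 1) * x := by
        rw [pow_succ]
        nlinarith [mul_nonneg (mul_nonneg hx₀ (sub_nonneg.2 hx₁)) (sub_nonneg.2 h2)]

theorem one_add_inv_pow_add_le {k : ℝ} (hk : 1 ≤ k) {m : ℕ} (hm : 0 < m) :
    (1 + 1 / k) ^ m + 2 / k * 51 ^ m + 4 / k * 25 ^ m ≤ 1 + 500 ^ m / k := by
  have hk0 : 0 < k := by linarith
  have h₁ := one_add_pow_le_one_add_mul (by positivity : 0 ≤ 1 / k)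
    (by rw [div_le_one hk0]; exact hk) m
  have h₂ : (2 : ℝ) ^ m ≤ 51 ^ m := pow_le_pow_left₀ (by norm_num) (by norm_num) m
  have h₃ : (25 : ℝ) ^ m ≤ 51 ^ m := pow_le_pow_left₀ (by norm_num) (by norm_num) m
  have h₄ : 7 * (51 : ℝ) ^ m ≤ 500 ^ m := by
    obtain ⟨m, rfl⟩ := Nat.exists_eq_add_of_lt hm
    have : (51 : ℝ) ^ m ≤ 500 ^ m := pow_le_pow_left₀ (by norm_num) (by norm_num) m
    rw [zero_add, pow_succ, pow_succ]
    nlinarith [pow_nonneg (by norm_num : (0 : ℝ) ≤ 51) m]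
  calc (1 + 1 / k) ^ m + 2 / k * 51 ^ m + 4 / k * 25 ^ m
      ≤ 1 + (2 ^ m - 1) * (1 / k) + 2 / k * 51 ^ m + 4 / k * 25 ^ m := by gcongr
    _ = 1 + (2 ^ m - 1 + 2 * 51 ^ m + 4 * 25 ^ m) / k := by ring
    _ ≤ 1 + 500 ^ m / k := by gcongr; linarith

/-- There is a universal constant `a₂ > 0` such that for all `k ≥ 80`, positive integers
`m ≤ (ln k)/4` and `n ≥ 1`, `∫_{[0,n]^m} ψ(maxᵢ xᵢ - 1/k) dx ≤ 1 + a₂^m / k`. -/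
theorem psi_multidim_integral_bound :
    ∃ a₂ > (0 : ℝ), ∀ (k : ℝ), 80 ≤ k → ∀ (m : ℕ), 0 < m → (m : ℝ) ≤ Real.log k / 4 →
      ∀ (n : ℝ), 1 ≤ n →
      (∫ x : Fin m → ℝ in Set.univ.pi fun _ => Set.Icc (0 : ℝ) n,
          psi k ((⨆ i, x i) - 1 / k)) ≤ 1 + a₂ ^ m / k := by
  refine ⟨500, by norm_num, fun k hk m hm hmk n _ => ?_⟩
  have : Nonempty (Fin m) := Fin.pos_iff_nonempty.mp hm
  have hL : 0 < log k := log_pos (by linarith)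
  have hm25 : 100 * (m : ℝ) / log k ≤ 25 := by
    rw [div_le_iff₀ hL]; linarith
  calc _ ≤ (1 + 1 / k) ^ m + 2 / k * 51 ^ m + 4 / k * (100 * m / log k) ^ m := by
        simpa using setIntegral_psi_ciSup_sub_inv_le (ι := Fin m) (by linarith) n
    _ ≤ (1 + 1 / k) ^ m + 2 / k * 51 ^ m + 4 / k * 25 ^ m := by gcongr
    _ ≤ 1 + 500 ^ m / k := one_add_inv_pow_add_le (by linarith) hm
end

section
/- Let $v_1, \ldots, v_N \ge 0$ and $w_1, \ldots, w_N \in (0,1]$ be sorted so that $v_1/w_1 \ge v_2/w_2 \ge \cdots \ge v_N/w_N$, let $k > 0$ with $\sum_i w_i \ge k$, and let $x^* \in [0,1]^N$ be the greedy fractional knapsack optimum (i.e., $x^*$ maximizes $\sum_i v_i x_i$ subject to $\sum_i w_i x_i \le k$, achieving total size exactly $k$). Let $\beta \in (0,1]$ and let $S$ be the largest prefix $\{1, \ldots, j\}$ with $\sum_{i \in S} w_i \le \beta k$. Then $\sum_{i \in S} v_i \ge (\beta - 1/k) \sum_i v_i x^*_i$. -/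
/-!
Let `d` be the density `v j / w j` of the first item outside the prefix `range j`, which has
weight `W` and value `A`. An exchange argument bounds any fractional solution `x` of weight `K`:
compared with the prefix, the items `i < j` lose density at least `d` per unit of weight and the
items `i ≥ j` gain at most `d`, so `∑ v x ≤ A + d (K - W)`. Since also `d W ≤ A`, this gives
`W ∑ v x ≤ K A`: the prefix carries a `W / K` fraction of the value of `x`. Maximality of the
prefix and `w ≤ 1` give `W ≥ β k - 1`.
-/

open Finset

theorem sum_range_mul_le_sum_range_of_sign_change {N j : ℕ} {u x : ℕ → ℝ} (hj : j ≤ N)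
    (hx : ∀ i < N, x i ∈ Set.Icc (0 : ℝ) 1) (hpos : ∀ i < j, 0 ≤ u i)
    (hneg : ∀ i, j ≤ i → i < N → u i ≤ 0) :
    ∑ i ∈ range N, u i * x i ≤ ∑ i ∈ range j, u i := by
  rw [← sum_range_add_sum_Ico _ hj]
  refine add_le_of_le_of_nonpos (sum_le_sum fun i hi => ?_) (sum_nonpos fun i hi => ?_)
  · have hi := mem_range.mp hi
    exact mul_le_of_le_one_right (hpos i hi) (hx i (hi.trans_le hj)).2
  · obtain ⟨hji, hiN⟩ := mem_Ico.mp hi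
    exact mul_nonpos_of_nonpos_of_nonneg (hneg i hji hiN) (hx i hiN).1

theorem sum_range_mul_le_sum_range_add_mul {N j : ℕ} {v w x : ℕ → ℝ} {d : ℝ} (hj : j ≤ N)
    (hx : ∀ i < N, x i ∈ Set.Icc (0 : ℝ) 1) (hhi : ∀ i < j, d * w i ≤ v i)
    (hlo : ∀ i, j ≤ i → i < N → v i ≤ d * w i) :
    ∑ i ∈ range N, v i * x i ≤
      ∑ i ∈ range j, v i + d * (∑ i ∈ range N, w i * x i - ∑ i ∈ range j, w i) := by
  have key := sum_range_mul_le_sum_range_of_sign_change (u := fun i => v i - d * w i) hj hx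
    (fun i hi => sub_nonneg.2 (hhi i hi)) (fun i hji hiN => sub_nonpos.2 (hlo i hji hiN))
  simp only [sub_mul, sum_sub_distrib, mul_assoc, ← mul_sum] at key
  linarith

theorem exists_density_threshold {N j : ℕ} {v w : ℕ → ℝ} (hj : j ≤ N)
    (hv : ∀ i < N, 0 ≤ v i) (hw : ∀ i < N, 0 < w i)
    (hsorted : ∀ ⦃i j⦄, i < N → j < N → i ≤ j → v j / w j ≤ v i / w i) :
    ∃ d, (∀ i < j, d * w i ≤ v i) ∧ ∀ i, j ≤ i → i < N → v i ≤ d * w i := by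
  rcases hj.lt_or_eq with hjN | rfl
  · refine ⟨v j / w j, fun i hi => ?_, fun i hji hiN => ?_⟩
    · have hiN := hi.trans hjN
      exact (le_div_iff₀ (hw i hiN)).1 (hsorted hiN hjN hi.le)
    · exact (div_le_iff₀ (hw i hiN)).1 (hsorted hjN hiN hji)
  · exact ⟨0, fun i hi => by simpa using hv i hi, fun i hji hiN => absurd hiN (not_lt.2 hji)⟩

theorem sum_range_mul_sum_mul_le_of_density_antitone {N j : ℕ} {v w x : ℕ → ℝ} (hj : j ≤ N)
    (hv : ∀ i < N, 0 ≤ v i) (hw : ∀ i < N, 0 < w i)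
    (hsorted : ∀ ⦃i j⦄, i < N → j < N → i ≤ j → v j / w j ≤ v i / w i)
    (hx : ∀ i < N, x i ∈ Set.Icc (0 : ℝ) 1)
    (hWK : ∑ i ∈ range j, w i ≤ ∑ i ∈ range N, w i * x i) :
    (∑ i ∈ range j, w i) * ∑ i ∈ range N, v i * x i ≤
      (∑ i ∈ range N, w i * x i) * ∑ i ∈ range j, v i := by
  obtain ⟨d, hhi, hlo⟩ := exists_density_threshold hj hv hw hsorted
  have hexchange := sum_range_mul_le_sum_range_add_mul hj hx hhi hlo
  have hdW : d * ∑ i ∈ range j, w i ≤ ∑ i ∈ range j, v i := by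
    rw [mul_sum]
    exact sum_le_sum fun i hi => hhi i (mem_range.mp hi)
  have hW : 0 ≤ ∑ i ∈ range j, w i :=
    sum_nonneg fun i hi => (hw i ((mem_range.mp hi).trans_le hj)).le
  nlinarith [mul_le_mul_of_nonneg_left hexchange hW,
    mul_le_mul_of_nonneg_right hdW (sub_nonneg.2 hWK)]

theorem sub_one_le_sum_range_of_maximal {N j : ℕ} {w : ℕ → ℝ} {c : ℝ}
    (hw : ∀ i < N, w i ≤ 1) (hc : c ≤ ∑ i ∈ range N, w i) (hj : j ≤ N)
    (hjmax : ∀ j' ≤ N, (∑ i ∈ range j', w i) ≤ c → j' ≤ j) :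
    c - 1 ≤ ∑ i ∈ range j, w i := by
  rcases hj.lt_or_eq with hjN | rfl
  · have hnext : c < ∑ i ∈ range (j + 1), w i :=
      lt_of_not_ge fun h => (hjmax (j + 1) hjN h).not_gt j.lt_succ_self
    rw [sum_range_succ] at hnext
    linarith [hw j hjN]
  · linarith

theorem prefix_value_vs_knapsack_opt_general (N : ℕ) (v w : ℕ → ℝ)
    (hv : ∀ i < N, 0 ≤ v i) (hw : ∀ i < N, w i ∈ Set.Ioc (0 : ℝ) 1)
    (hsorted : ∀ ⦃i j⦄, i < N → j < N → i ≤ j → v j / w j ≤ v i / w i)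
    (k : ℝ) (hk : 0 < k) (htot : k ≤ ∑ i ∈ range N, w i)
    (x : ℕ → ℝ) (hx01 : ∀ i < N, x i ∈ Set.Icc (0 : ℝ) 1)
    (hxfull : ∑ i ∈ range N, w i * x i = k)
    (β : ℝ) (hβ : β ∈ Set.Ioc (0 : ℝ) 1)
    (j : ℕ) (hj : j ≤ N) (hjle : ∑ i ∈ range j, w i ≤ β * k)
    (hjmax : ∀ j' ≤ N, (∑ i ∈ range j', w i) ≤ β * k → j' ≤ j) :
    (β - 1 / k) * ∑ i ∈ range N, v i * x i ≤ ∑ i ∈ range j, v i := by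
  have hβk : β * k ≤ k := mul_le_of_le_one_left hk.le hβ.2
  have hW : β * k - 1 ≤ ∑ i ∈ range j, w i :=
    sub_one_le_sum_range_of_maximal (fun i hi => (hw i hi).2) (hβk.trans htot) hj hjmax
  have hfraction := sum_range_mul_sum_mul_le_of_density_antitone hj hv (fun i hi => (hw i hi).1)
    hsorted hx01 (hxfull ▸ hjle.trans hβk)
  have hS : 0 ≤ ∑ i ∈ range N, v i * x i :=
    sum_nonneg fun i hi => mul_nonneg (hv i (mem_range.mp hi)) (hx01 i (mem_range.mp hi)).1
  rw [hxfull] at hfraction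
  calc (β - 1 / k) * ∑ i ∈ range N, v i * x i
      = (β * k - 1) * (∑ i ∈ range N, v i * x i) / k := by field_simp
    _ ≤ (∑ i ∈ range j, w i) * (∑ i ∈ range N, v i * x i) / k := by gcongr
    _ ≤ ∑ i ∈ range j, v i := by rwa [div_le_iff₀ hk, mul_comm _ k]

/-- A prefix of the density-sorted items of total size at most `βk` (taken maximal)
captures at least a `(β - 1/k)` fraction of the fractional knapsack optimum. -/
theorem prefix_value_vs_knapsack_opt (N : ℕ) (v w : ℕ → ℝ)
    (hv : ∀ i < N, 0 ≤ v i) (hw : ∀ i < N, w i ∈ Set.Ioc (0 : ℝ) 1)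
    (hsorted : ∀ ⦃i j⦄, i < N → j < N → i ≤ j → v j / w j ≤ v i / w i)
    (k : ℝ) (hk : 0 < k) (htot : k ≤ ∑ i ∈ range N, w i)
    (x : ℕ → ℝ) (hx01 : ∀ i < N, x i ∈ Set.Icc (0 : ℝ) 1)
    (hxfull : ∑ i ∈ range N, w i * x i = k)
    (hxopt : ∀ y : ℕ → ℝ, (∀ i < N, y i ∈ Set.Icc (0 : ℝ) 1) →
      (∑ i ∈ range N, w i * y i) ≤ k →
      (∑ i ∈ range N, v i * y i) ≤ ∑ i ∈ range N, v i * x i)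
    (β : ℝ) (hβ : β ∈ Set.Ioc (0 : ℝ) 1)
    (j : ℕ) (hj : j ≤ N) (hjle : ∑ i ∈ range j, w i ≤ β * k)
    (hjmax : ∀ j' ≤ N, (∑ i ∈ range j', w i) ≤ β * k → j' ≤ j) :
    (β - 1 / k) * ∑ i ∈ range N, v i * x i ≤ ∑ i ∈ range j, v i :=
  prefix_value_vs_knapsack_opt_general N v w hv hw hsorted k hk htot x hx01 hxfull β hβ j hj hjle
    hjmax
end
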